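/- For an odd prime p with n = (p-1)/2, and integers i, j with 0 ≤ i ≤ n, 1 ≤ j ≤ n, and i+j ≥ n+1, one has C(2i,i)*C(2j+2n,j+n)/C(i+j+n,i) ≡ (-1)^i * 4^(i+j) * C(j-1, n-i) / 2 modulo p. -/

import Mathlib

/-!
Write `S(a, b) = (2a)! (2b)! / (a! b! (a+b)!)` for Gessel's super Catalan numbers; they are
integers by Legendre's formula and `⌊2x⌋ + ⌊2y⌋ ≥ ⌊x⌋ + ⌊y⌋ + ⌊x + y⌋`.

For `p = 2n + 1` and `b = j + n`, both `(i + b)!` and `(2b)!` contain `p` exactly once, and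
`(p + r)! / p ≡ -r!` by Wilson's theorem, so `S(i, b) i! b! (i+j-n-1)! ≡ (2i)! (2j-1)!`.
Modulo `p` we have `2(n - k) ≡ -(2k + 1)` and `2(n + 1 + k) ≡ 2k + 1`, whence
`(2i)! ≡ (-4)^i i! n! / (n-i)!` and `(2j-1)! ≡ 2^(2j-1) (j-1)! (j+n)! / n!`. Substituting these and `(j-1)! = C(j-1, n-i) (n-i)! (i+j-n-1)!` gives the congruence.
-/

open Nat

theorem Nat.div_add_div_add_add_div_le (a b t : ℕ) :
    a / t + b / t + (a + b) / t ≤ 2 * a / t + 2 * b / t := by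
  rcases Nat.eq_zero_or_pos t with rfl | ht
  · simp
  have := Nat.mod_lt a ht
  have := Nat.mod_lt b ht
  rw [two_mul, two_mul, Nat.add_div ht, Nat.add_div ht, Nat.add_div ht]
  split_ifs <;> omega

theorem Nat.factorial_mul_factorial_mul_factorial_add_dvd (a b : ℕ) :
    a ! * b ! * (a + b)! ∣ (2 * a)! * (2 * b)! := by
  rw [← factorization_prime_le_iff_dvd (by positivity) (by positivity)]
  intro q hq
  have hlog : ∀ m ≤ 2 * a + 2 * b, log q m < 2 * a + 2 * b + 1 := fun m hm =>
    (log_le_self q m).trans_lt (by omega)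
  simp only [factorization_mul (factorial_ne_zero _) (factorial_ne_zero _),
    factorization_mul (mul_ne_zero (factorial_ne_zero _) (factorial_ne_zero _))
      (factorial_ne_zero _), Finsupp.add_apply]
  rw [factorization_factorial hq (hlog a (by omega)),
    factorization_factorial hq (hlog b (by omega)),
    factorization_factorial hq (hlog (a + b) (by omega)),
    factorization_factorial hq (hlog (2 * a) (by omega)),
    factorization_factorial hq (hlog (2 * b) (by omega)),
    ← Finset.sum_add_distrib, ← Finset.sum_add_distrib, ← Finset.sum_add_distrib]
  exact Finset.sum_le_sum fun s _ => div_add_div_add_add_div_le a b (q ^ s)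

def superCatalan (a b : ℕ) : ℕ :=
  (2 * a)! * (2 * b)! / (a ! * b ! * (a + b)!)

theorem superCatalan_mul (a b : ℕ) :
    superCatalan a b * (a ! * b ! * (a + b)!) = (2 * a)! * (2 * b)! :=
  Nat.div_mul_cancel (factorial_mul_factorial_mul_factorial_add_dvd a b)

theorem superCatalan_eq_choose_mul_choose_div_choose (a b : ℕ) :
    superCatalan a b = (2 * a).choose a * (2 * b).choose b / (a + b).choose a := by
  refine (Nat.div_eq_of_eq_mul_left (choose_pos (le_add_right a b)) ?_).symm
  refine Nat.eq_of_mul_eq_mul_right (by positivity : 0 < a ! * a ! * b ! * b !) ?_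
  have hab := add_choose_mul_factorial_mul_factorial b a
  rw [add_comm b a] at hab
  calc (2 * a).choose a * (2 * b).choose b * (a ! * a ! * b ! * b !)
      = ((a + a).choose a * a ! * a !) * ((b + b).choose b * b ! * b !) := by
        rw [two_mul, two_mul]; ring
    _ = superCatalan a b * (a ! * b ! * (a + b)!) := by
        rw [add_choose_mul_factorial_mul_factorial, add_choose_mul_factorial_mul_factorial,
          superCatalan_mul, two_mul, two_mul]
    _ = superCatalan a b * (a + b).choose a * (a ! * a ! * b ! * b !) := by
        rw [← hab]; ring

namespace ZMod

theorem natCast_factorial_add_div_self {p : ℕ} [hp : Fact p.Prime] (r : ℕ) :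
    (((p + r)! / p : ℕ) : ZMod p) = -(r ! : ZMod p) := by
  rw [← factorial_mul_ascFactorial, ← mul_factorial_pred hp.out.ne_zero, mul_assoc,
    Nat.mul_div_cancel_left _ hp.out.pos]
  push_cast [wilsons_lemma]
  rw [← one_ascFactorial, ascFactorial_eq_prod_range, ascFactorial_eq_prod_range]
  push_cast [natCast_self]
  simp

theorem natCast_superCatalan_mul {p : ℕ} [hp : Fact p.Prime] {a b r s : ℕ}
    (hr : a + b = p + r) (hs : 2 * b = p + s) :
    (superCatalan a b * a ! * b ! * r ! : ZMod p) = (2 * a)! * s ! := by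
  have key := superCatalan_mul a b
  rw [hr, hs, ← Nat.mul_div_cancel' (dvd_factorial hp.out.pos (le_add_right p r)),
    ← Nat.mul_div_cancel' (dvd_factorial hp.out.pos (le_add_right p s))] at key
  have hcancel : superCatalan a b * a ! * b ! * ((p + r)! / p) = (2 * a)! * ((p + s)! / p) :=
    Nat.eq_of_mul_eq_mul_left hp.out.pos (by convert key using 1 <;> ring)
  have := congrArg (Nat.cast : ℕ → ZMod p) hcancel
  push_cast [natCast_factorial_add_div_self] at this
  linear_combination -this

theorem two_mul_add_one_eq_zero (n : ℕ) : (2 * n + 1 : ZMod (2 * n + 1)) = 0 := by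
  exact_mod_cast natCast_self (2 * n + 1)

section HalfIntegers

variable {n : ℕ}

theorem natCast_factorial_two_mul {i : ℕ} (hi : i ≤ n) :
    ((2 * i)! : ZMod (2 * n + 1)) = (-4) ^ i * i ! * n.descFactorial i := by
  induction i with
  | zero => simp
  | succ i ih =>
    have hodd : ((2 * i + 1 : ℕ) : ZMod (2 * n + 1)) = -2 * (n - i : ℕ) := by
      push_cast [Nat.cast_sub (by omega : i ≤ n)]
      linear_combination two_mul_add_one_eq_zero n
    rw [show 2 * (i + 1) = 2 * i + 1 + 1 by ring, factorial_succ, factorial_succ,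
      descFactorial_succ, factorial_succ i, Nat.cast_mul, Nat.cast_mul, hodd, ih (by omega)]
    push_cast
    ring

theorem natCast_factorial_two_mul_add_one (j : ℕ) :
    ((2 * j + 1)! : ZMod (2 * n + 1)) = 2 * 4 ^ j * j ! * (n + 1).ascFactorial (j + 1) := by
  induction j with
  | zero =>
    simp only [ascFactorial_succ, ascFactorial_zero]
    push_cast
    linear_combination -two_mul_add_one_eq_zero n
  | succ j ih =>
    have hodd : ((2 * j + 3 : ℕ) : ZMod (2 * n + 1)) = 2 * (n + 1 + (j + 1) : ℕ) := by
      push_cast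
      linear_combination -two_mul_add_one_eq_zero n
    rw [show 2 * (j + 1) + 1 = 2 * j + 1 + 1 + 1 by ring, factorial_succ, factorial_succ,
      ascFactorial_succ (k := j + 1), factorial_succ j, Nat.cast_mul, Nat.cast_mul,
      show 2 * j + 1 + 1 + 1 = 2 * j + 3 by ring, hodd, ih]
    push_cast
    ring

theorem natCast_factorial_ne_zero (hp : (2 * n + 1).Prime) {m : ℕ} (hm : m ≤ 2 * n) :
    (m ! : ZMod (2 * n + 1)) ≠ 0 := by
  rw [Ne, natCast_eq_zero_iff, hp.dvd_factorial]
  omega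

theorem natCast_superCatalan_add_one_add {i j : ℕ} (hp : (2 * n + 1).Prime) (hi : i ≤ n)
    (hj : j < n) (hij : n ≤ i + j) :
    (superCatalan i (j + 1 + n) : ZMod (2 * n + 1)) =
      2 * (-4) ^ i * 4 ^ j * j.choose (n - i) := by
  have := Fact.mk hp
  set r := i + j - n
  have hcat := natCast_superCatalan_mul (p := 2 * n + 1) (a := i) (b := j + 1 + n) (r := r)
    (s := 2 * j + 1) (by omega) (by omega)
  have hdesc : ((n - i)! * n.descFactorial i : ZMod (2 * n + 1)) = n ! := by
    rw [← Nat.cast_mul, factorial_mul_descFactorial hi]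
  have hasc : (n ! * (n + 1).ascFactorial (j + 1) : ZMod (2 * n + 1)) = (j + 1 + n)! := by
    rw [← Nat.cast_mul, factorial_mul_ascFactorial, add_comm n]
  have hchoose : (j.choose (n - i) * (n - i)! * r ! : ZMod (2 * n + 1)) = j ! := by
    rw [show r = j - (n - i) by omega, ← Nat.cast_mul, ← Nat.cast_mul,
      choose_mul_factorial_mul_factorial (by omega : n - i ≤ j)]
  have hX : (i ! * (j + 1 + n)! * r ! * (n - i)! * n ! : ZMod (2 * n + 1)) ≠ 0 := by
    simp only [mul_ne_zero_iff]
    refine ⟨⟨⟨⟨?_, ?_⟩, ?_⟩, ?_⟩, ?_⟩ <;>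
      exact natCast_factorial_ne_zero hp (by omega)
  refine mul_right_cancel₀ hX ?_
  calc (superCatalan i (j + 1 + n) : ZMod (2 * n + 1)) *
        (i ! * (j + 1 + n)! * r ! * (n - i)! * n !)
      = (superCatalan i (j + 1 + n) * i ! * (j + 1 + n)! * r !) * ((n - i)! * n !) := by ring
    _ = (2 * i)! * (2 * j + 1)! * ((n - i)! * n !) := by rw [hcat]
    _ = (-4) ^ i * i ! * (2 * 4 ^ j * j !) * ((n - i)! * n.descFactorial i) *
          (n ! * (n + 1).ascFactorial (j + 1)) := by
        rw [natCast_factorial_two_mul hi, natCast_factorial_two_mul_add_one]; ring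
    _ = 2 * (-4) ^ i * 4 ^ j * j.choose (n - i) *
          (i ! * (j + 1 + n)! * r ! * (n - i)! * n !) := by
        rw [hdesc, hasc, ← hchoose]; ring

end HalfIntegers

end ZMod

theorem stmt16 (p : ℕ) (hp : p.Prime) (hodd : Odd p) (i j : ℕ)
    (hi : i ≤ (p - 1) / 2) (hj1 : 1 ≤ j) (hj : j ≤ (p - 1) / 2)
    (hij : (p - 1) / 2 + 1 ≤ i + j) :
    (↑((Nat.choose (2 * i) i * Nat.choose (2 * j + 2 * ((p - 1) / 2)) (j + (p - 1) / 2)) /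
          Nat.choose (i + j + (p - 1) / 2) i) : ZMod p) =
      (-1 : ZMod p) ^ i * 4 ^ (i + j) * (Nat.choose (j - 1) ((p - 1) / 2 - i) : ZMod p) * (2 : ZMod p)⁻¹ := by
  obtain ⟨n, rfl⟩ := hodd
  obtain ⟨j, rfl⟩ : ∃ j', j = j' + 1 := ⟨j - 1, by omega⟩
  have hn : (2 * n + 1 - 1) / 2 = n := by omega
  rw [hn] at hi hj hij ⊢
  have := Fact.mk hp
  have h2 : (2 : ZMod (2 * n + 1)) ≠ 0 := by
    intro h
    have hle := Nat.le_of_dvd two_pos ((ZMod.natCast_eq_zero_iff 2 _).1 (by exact_mod_cast h))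
    omega
  rw [show 2 * (j + 1) + 2 * n = 2 * (j + 1 + n) by ring, add_assoc i,
    ← superCatalan_eq_choose_mul_choose_div_choose,
    ZMod.natCast_superCatalan_add_one_add hp hi (by omega) (by omega), add_tsub_cancel_right]
  rw [eq_mul_inv_iff_mul_eq₀ h2, neg_pow]
  ring
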